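/- Let ℏ > 0 and A ∈ (0, π/2). On the interval (0, ℏ cot A), the function x ↦ cot²(arctan(ℏ/x) − A) − cot²(arctan(ℏ/x) + A) is positive and strictly increasing. -/

import Mathlib

/-!
Write `θ = arctan (h / x)`, so that `cot θ = x / h =: u`, and `k = cot A`. The addition formulas
for `cot` turn the difference into `4 k (k² + 1) · u (u² + 1) / (k² - u²)²`; on `0 ≤ u < k` its
numerator increases and its positive denominator decreases, and `u < k` is exactly `x < h cot A`.
-/

open Real

namespace Real

theorem cot_arctan (y : ℝ) : cot (arctan y) = y⁻¹ := by
  rw [cot_eq_cos_div_sin, cos_arctan, sin_arctan]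
  have : 0 < √(1 + y ^ 2) := by positivity
  field_simp

theorem cot_add_of_sin_ne_zero {a b : ℝ} (ha : sin a ≠ 0) (hb : sin b ≠ 0) :
    cot (a + b) = (cot a * cot b - 1) / (cot a + cot b) := by
  simp only [cot_eq_cos_div_sin, cos_add, sin_add]
  rw [div_mul_div_comm, div_add_div _ _ ha hb, div_sub_one (mul_ne_zero ha hb),
    div_div_div_cancel_right₀ (mul_ne_zero ha hb)]
  ring_nf

theorem cot_sub_of_sin_ne_zero {a b : ℝ} (ha : sin a ≠ 0) (hb : sin b ≠ 0) :
    cot (a - b) = (cot a * cot b + 1) / (cot b - cot a) := by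
  simp only [cot_eq_cos_div_sin, cos_sub, sin_sub]
  rw [div_mul_div_comm, div_sub_div _ _ hb ha, mul_comm (sin b) (sin a),
    div_add_one (mul_ne_zero ha hb), div_div_div_cancel_right₀ (mul_ne_zero ha hb)]
  ring_nf

theorem cot_sub_sq_sub_cot_add_sq {θ A : ℝ} (hθ : sin θ ≠ 0) (hA : sin A ≠ 0)
    (h₁ : cot θ ≠ cot A) (h₂ : cot θ ≠ -cot A) :
    cot (θ - A) ^ 2 - cot (θ + A) ^ 2 =
      4 * cot A * (cot A ^ 2 + 1) *
        (cot θ * (cot θ ^ 2 + 1) / (cot A ^ 2 - cot θ ^ 2) ^ 2) := by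
  rw [cot_sub_of_sin_ne_zero hθ hA, cot_add_of_sin_ne_zero hθ hA]
  have hsub : cot A - cot θ ≠ 0 := sub_ne_zero.2 h₁.symm
  have hadd : cot θ + cot A ≠ 0 := by rwa [Ne, add_eq_zero_iff_eq_neg]
  have hsq : cot A ^ 2 - cot θ ^ 2 ≠ 0 := by
    rw [sq_sub_sq, add_comm]
    exact mul_ne_zero hadd hsub
  field_simp
  ring

end Real

theorem strictMonoOn_mul_sq_add_one_div_sq_sub_sq (k : ℝ) :
    StrictMonoOn (fun u : ℝ => u * (u ^ 2 + 1) / (k ^ 2 - u ^ 2) ^ 2) (Set.Ico 0 k) := by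
  intro a ⟨ha0, hak⟩ b ⟨hb0, hbk⟩ hab
  have hsq : a ^ 2 < b ^ 2 := by gcongr
  have hb : 0 < k ^ 2 - b ^ 2 := by nlinarith
  calc a * (a ^ 2 + 1) / (k ^ 2 - a ^ 2) ^ 2
      < b * (b ^ 2 + 1) / (k ^ 2 - a ^ 2) ^ 2 := by gcongr; nlinarith
    _ ≤ b * (b ^ 2 + 1) / (k ^ 2 - b ^ 2) ^ 2 := by gcongr

theorem vertical_hitting_prob_strictMono (h A : ℝ) (hh : 0 < h)
    (hA : A ∈ Set.Ioo 0 (π / 2)) :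
    (∀ x ∈ Set.Ioo (0 : ℝ) (h * Real.cot A),
        0 < (Real.cot (Real.arctan (h / x) - A)) ^ 2 -
            (Real.cot (Real.arctan (h / x) + A)) ^ 2) ∧
      StrictMonoOn
        (fun x : ℝ => (Real.cot (Real.arctan (h / x) - A)) ^ 2 -
          (Real.cot (Real.arctan (h / x) + A)) ^ 2)
        (Set.Ioo (0 : ℝ) (h * Real.cot A)) := by
  have hsinA : 0 < sin A := sin_pos_of_pos_of_lt_pi hA.1 (by linarith [hA.2, pi_pos])
  have hk : 0 < cot A :=
    inv_pos.1 (by rw [cot_inv_eq_tan]; exact tan_pos_of_pos_of_lt_pi_div_two hA.1 hA.2)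
  set k := cot A
  set g := fun u : ℝ => u * (u ^ 2 + 1) / (k ^ 2 - u ^ 2) ^ 2
  have hC : 0 < 4 * k * (k ^ 2 + 1) := by positivity
  have hmaps : Set.MapsTo (· / h) (Set.Ioo 0 (h * k)) (Set.Ico 0 k) := fun x ⟨hx0, hxk⟩ =>
    ⟨by positivity, (div_lt_iff₀' hh).2 hxk⟩
  have hF : ∀ x ∈ Set.Ioo 0 (h * k), cot (arctan (h / x) - A) ^ 2 -
      cot (arctan (h / x) + A) ^ 2 = 4 * k * (k ^ 2 + 1) * g (x / h) := by
    intro x hx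
    have hθ : cot (arctan (h / x)) = x / h := by rw [cot_arctan, inv_div]
    have hsinθ : sin (arctan (h / x)) ≠ 0 := (sin_pos_of_pos_of_lt_pi
      (arctan_pos.2 (div_pos hh hx.1)) (by linarith [arctan_lt_pi_div_two (h / x), pi_pos])).ne'
    have hu := hmaps hx
    rw [cot_sub_sq_sub_cot_add_sq hsinθ hsinA.ne' (by rw [hθ]; exact hu.2.ne)
      (by rw [hθ]; linarith [hu.1]), hθ]
  have hg := strictMonoOn_mul_sq_add_one_div_sq_sub_sq k
  refine ⟨fun x hx => ?_, fun a ha b hb hab => ?_⟩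
  · have hg_pos : g 0 < g (x / h) := hg ⟨le_rfl, hk⟩ (hmaps hx) (div_pos hx.1 hh)
    rw [hF x hx]
    exact mul_pos hC (by simpa [g] using hg_pos)
  · simp only [hF a ha, hF b hb]
    exact mul_lt_mul_of_pos_left (hg (hmaps ha) (hmaps hb) (div_lt_div_of_pos_right hab hh)) hC
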